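/- arXiv:2107.03040 — 2 statements merged into one kernel-verified Lean document; each statement's English description precedes it below -/
import Mathlib

section
/- On series-parallel graphs, in any Nash equilibrium s of a capacitated symmetric cost-sharing connection game with generalized cost-sharing functions, the payment of every agent is at most the optimal sum-cost: p_j(s) ≤ cost_sc(s*) for all agents j, where s* is a sum-cost-optimal feasible profile. (Assume the path-insertion property: for any feasible profile s_{−i} of n−1 agents, there exists an s-t path s' using only edges of E(s*) such that (s_{−i}, s') is feasible.) -/
/-!
Agent `j` can deviate to the path `P ⊆ E(s*)` given by path insertion. On `P` it shares
every edge with at least itself, so pays at most `Σ_{e ∈ P} p_e`; and `s*` collects at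
least `p_e` on each edge it uses, so this is at most `cost_sc(s*)`.
-/

open Finset

namespace Stmt11

variable {α : Type*} [DecidableEq α]

/-- Number of agents using edge `e` under profile `s` (paths as edge sets). -/
def users {n : ℕ} (s : Fin n → Finset α) (e : α) : ℕ :=
  (univ.filter (fun j => e ∈ s j)).card

/-- Payment of agent `j`: the sum over the edges of its path of the shared
cost `f_e(x_e(s))`. -/
def pay {n : ℕ} (f : α → ℕ → ℝ) (s : Fin n → Finset α) (j : Fin n) : ℝ :=
  ∑ e ∈ s j, f e (users s e)

/-- Sum-cost of a profile. -/
def sumCost {n : ℕ} (f : α → ℕ → ℝ) (s : Fin n → Finset α) : ℝ :=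
  ∑ j, pay f s j

/-- A profile is feasible if no edge capacity is exceeded. -/
def Feasible {n : ℕ} (c : α → ℕ) (s : Fin n → Finset α) : Prop :=
  ∀ e, users s e ≤ c e

variable {n : ℕ}

theorem one_le_users_of_mem {s : Fin n → Finset α} {j : Fin n} {e : α} (he : e ∈ s j) :
    1 ≤ users s e :=
  card_pos.mpr ⟨j, mem_filter.mpr ⟨mem_univ j, he⟩⟩

theorem sum_sum_eq_sum_users_mul (s : Fin n → Finset α) (g : α → ℝ) :
    ∑ j, ∑ e ∈ s j, g e = ∑ e ∈ univ.biUnion s, (users s e : ℝ) * g e := by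
  rw [sum_comm' (t' := univ.biUnion s) (s' := fun e => univ.filter (fun j => e ∈ s j))
    (fun j e => by simpa using fun h => ⟨j, h⟩)]
  simp only [sum_const, nsmul_eq_mul, users]

theorem sumCost_eq_sum_users_mul (f : α → ℕ → ℝ) (s : Fin n → Finset α) :
    sumCost f s = ∑ e ∈ univ.biUnion s, (users s e : ℝ) * f e (users s e) :=
  sum_sum_eq_sum_users_mul s fun e => f e (users s e)

theorem sum_cost_biUnion_le_sumCost {p : α → ℝ} {f : α → ℕ → ℝ}
    (hlb : ∀ e, ∀ k : ℕ, 1 ≤ k → p e / (k : ℝ) ≤ f e k) (s : Fin n → Finset α) :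
    ∑ e ∈ univ.biUnion s, p e ≤ sumCost f s := by
  rw [sumCost_eq_sum_users_mul]
  refine sum_le_sum fun e he => ?_
  obtain ⟨k, -, hk⟩ := mem_biUnion.mp he
  have hu := one_le_users_of_mem hk
  have hupos : (0 : ℝ) < users s e := by exact_mod_cast hu
  calc p e = users s e * (p e / users s e) := by field_simp
    _ ≤ users s e * f e (users s e) := by gcongr; exact hlb e _ hu

theorem pay_le_sum_cost {p : α → ℝ} {f : α → ℕ → ℝ}
    (hmono : ∀ e, ∀ a b : ℕ, 1 ≤ a → a ≤ b → f e b ≤ f e a) (hone : ∀ e, f e 1 = p e)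
    (s : Fin n → Finset α) (j : Fin n) :
    pay f s j ≤ ∑ e ∈ s j, p e :=
  sum_le_sum fun e he => (hmono e 1 _ le_rfl (one_le_users_of_mem he)).trans_eq (hone e)

end Stmt11

open Stmt11 in
theorem stmt_11_general {α : Type*} [DecidableEq α] (n : ℕ)
    (Paths : Finset (Finset α))            -- the s-t paths of the SP graph
    (p : α → ℝ) (c : α → ℕ) (f : α → ℕ → ℝ)
    (hp : ∀ e, 0 ≤ p e)
    (hmono : ∀ e, ∀ a b : ℕ, 1 ≤ a → a ≤ b → f e b ≤ f e a)
    (hlb : ∀ e, ∀ k : ℕ, 1 ≤ k → p e / (k : ℝ) ≤ f e k)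
    (hone : ∀ e, f e 1 = p e)
    (s sstar : Fin n → Finset α)
    -- `s` is a Nash equilibrium
    (hNE : ∀ (j : Fin n), ∀ P ∈ Paths, Feasible c (Function.update s j P) →
      pay f s j ≤ pay f (Function.update s j P) j)
    -- path-insertion property (flow lemma on SP graphs), for `sstar`
    (hinsert : ∀ i : Fin n, ∃ P ∈ Paths,
      P ⊆ univ.biUnion sstar ∧ Feasible c (Function.update s i P)) :
    ∀ j : Fin n, pay f s j ≤ sumCost f sstar := by
  intro j
  obtain ⟨P, hP, hPsub, hPfeas⟩ := hinsert j
  calc pay f s j ≤ pay f (Function.update s j P) j := hNE j P hP hPfeas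
    _ ≤ ∑ e ∈ P, p e := by
      simpa only [Function.update_self] using pay_le_sum_cost hmono hone (Function.update s j P) j
    _ ≤ ∑ e ∈ univ.biUnion sstar, p e := sum_le_sum_of_subset_of_nonneg hPsub fun e _ _ => hp e
    _ ≤ sumCost f sstar := sum_cost_biUnion_le_sumCost hlb sstar

open Stmt11 in
/-- Per-agent bound on SP graphs: in any Nash equilibrium `s` of a capacitated
symmetric cost-sharing connection game with generalized cost-sharing
functions, assuming the path-insertion property for a sum-cost optimal
feasible profile `sstar`, the payment of every agent is at most the optimal
sum-cost `cost_sc(sstar)`. -/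
theorem stmt_11 {α : Type*} [DecidableEq α] (n : ℕ)
    (Paths : Finset (Finset α))            -- the s-t paths of the SP graph
    (p : α → ℝ) (c : α → ℕ) (f : α → ℕ → ℝ)
    (hp : ∀ e, 0 ≤ p e)
    (hmono : ∀ e, ∀ a b : ℕ, 1 ≤ a → a ≤ b → f e b ≤ f e a)
    (hlb : ∀ e, ∀ k : ℕ, 1 ≤ k → p e / (k : ℝ) ≤ f e k)
    (hone : ∀ e, f e 1 = p e)
    (s sstar : Fin n → Finset α)
    (hvalid : ∀ j, s j ∈ Paths) (hvalidstar : ∀ j, sstar j ∈ Paths)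
    (hfeas : Feasible c s) (hfeasstar : Feasible c sstar)
    -- `s` is a Nash equilibrium
    (hNE : ∀ (j : Fin n), ∀ P ∈ Paths, Feasible c (Function.update s j P) →
      pay f s j ≤ pay f (Function.update s j P) j)
    -- path-insertion property (flow lemma on SP graphs), for `sstar`
    (hinsert : ∀ i : Fin n, ∃ P ∈ Paths,
      P ⊆ univ.biUnion sstar ∧ Feasible c (Function.update s i P)) :
    ∀ j : Fin n, pay f s j ≤ sumCost f sstar :=
  stmt_11_general n Paths p c f hp hmono hlb hone s sstar hNE hinsert
end

section
/- Price of stability under max-cost for asymmetric games is at most n²: in a capacitated asymmetric cost-sharing connection game with n agents and generalized cost-sharing functions, any Nash equilibrium s reached from a max-cost optimal profile s* by cost-decreasing deviations satisfies cost_mc(s) ≤ n² · cost_mc(s*). -/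
open Finset

namespace Stmt16

variable {α : Type*} [DecidableEq α]

/-- Number of agents using edge `e` under profile `s` (agent `j`'s path is
the edge set `s j`). -/
def users {n : ℕ} (s : Fin n → Finset α) (e : α) : ℕ :=
  (univ.filter (fun j => e ∈ s j)).card

/-- Payment of agent `j`. -/
def pay {n : ℕ} (f : α → ℕ → ℝ) (s : Fin n → Finset α) (j : Fin n) : ℝ :=
  ∑ e ∈ s j, f e (users s e)

/-- Rosenthal's potential of a profile, over the finite edge set `E`. -/
def potential {n : ℕ} (E : Finset α) (f : α → ℕ → ℝ) (s : Fin n → Finset α) : ℝ :=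
  ∑ e ∈ E, ∑ k ∈ Finset.Icc 1 (users s e), f e k

end Stmt16

/-!
Rosenthal's potential is sandwiched by the social cost. Since the shares are non-increasing,
the `x_e` users of `e` together pay `x_e f_e(x_e) ≤ f_e(1) + ⋯ + f_e(x_e)`, so `cost_sc ≤ Φ`.
Conversely `f_e(k) ≤ f_e(1) = p_e` bounds `Φ` by `∑_e x_e p_e = ∑_j ∑_{e ∈ s_j} p_e`, and
`p_e ≤ x_e f_e(x_e) ≤ n f_e(x_e)` turns this into `n · cost_sc`. Max-cost and social cost
differ by at most a factor `n`, which gives `n²` overall.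
-/

section

variable {ι M : Type*} [AddCommMonoid M] [LinearOrder M] [IsOrderedAddMonoid M]
  {s : Finset ι} (hs : s.Nonempty)

lemma Finset.sup'_le_sum_of_nonneg {g : ι → M} (hg : ∀ i ∈ s, 0 ≤ g i) :
    s.sup' hs g ≤ ∑ i ∈ s, g i :=
  sup'_le hs g fun _ hi => single_le_sum hg hi

lemma Finset.sum_le_card_nsmul_sup' (g : ι → M) : ∑ i ∈ s, g i ≤ #s • s.sup' hs g :=
  sum_le_card_nsmul s g _ fun _ hi => le_sup' g hi

end

namespace Stmt16

variable {α : Type*} {n : ℕ} {E : Finset α} {p : α → ℝ} {f : α → ℕ → ℝ}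

lemma cost_nonneg (hp : ∀ e ∈ E, 0 ≤ p e) (hlb : ∀ e ∈ E, ∀ k : ℕ, 1 ≤ k → p e / k ≤ f e k)
    {e : α} (he : e ∈ E) {k : ℕ} (hk : 1 ≤ k) : 0 ≤ f e k :=
  (div_nonneg (hp e he) k.cast_nonneg).trans (hlb e he k hk)

variable [DecidableEq α]

lemma one_le_users {s : Fin n → Finset α} {j : Fin n} {e : α} (he : e ∈ s j) :
    1 ≤ users s e :=
  card_pos.mpr ⟨j, mem_filter.mpr ⟨mem_univ j, he⟩⟩

lemma users_le (s : Fin n → Finset α) (e : α) : users s e ≤ n :=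
  (card_filter_le _ _).trans_eq (card_fin n)

lemma sum_sum_eq_sum_users_mul {s : Fin n → Finset α} (hs : ∀ j, s j ⊆ E)
    (g : α → ℝ) : ∑ j, ∑ e ∈ s j, g e = ∑ e ∈ E, (users s e : ℝ) * g e := by
  rw [sum_comm' (t' := E) (s' := fun e => univ.filter (fun j => e ∈ s j))]
  · simp only [sum_const, nsmul_eq_mul, users]
  · intro j e
    simpa using fun he => hs j he

lemma sum_pay_eq_sum_users_mul {s : Fin n → Finset α} (hs : ∀ j, s j ⊆ E) :
    ∑ j, pay f s j = ∑ e ∈ E, (users s e : ℝ) * f e (users s e) :=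
  sum_sum_eq_sum_users_mul hs _

lemma pay_nonneg (hp : ∀ e ∈ E, 0 ≤ p e)
    (hlb : ∀ e ∈ E, ∀ k : ℕ, 1 ≤ k → p e / k ≤ f e k) {s : Fin n → Finset α}
    (hs : ∀ j, s j ⊆ E) (j : Fin n) : 0 ≤ pay f s j :=
  sum_nonneg fun _ he => cost_nonneg hp hlb (hs j he) (one_le_users he)

lemma sum_pay_le_potential (hmono : ∀ e ∈ E, ∀ a b : ℕ, 1 ≤ a → a ≤ b → f e b ≤ f e a)
    {s : Fin n → Finset α} (hs : ∀ j, s j ⊆ E) : ∑ j, pay f s j ≤ potential E f s := by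
  rw [sum_pay_eq_sum_users_mul hs]
  refine sum_le_sum fun e he => ?_
  have := card_nsmul_le_sum (Icc 1 (users s e)) (f e) (f e (users s e))
    fun k hk => hmono e he k _ (mem_Icc.mp hk).1 (mem_Icc.mp hk).2
  simpa [nsmul_eq_mul] using this

lemma potential_le_sum_sum (hmono : ∀ e ∈ E, ∀ a b : ℕ, 1 ≤ a → a ≤ b → f e b ≤ f e a)
    (hone : ∀ e ∈ E, f e 1 = p e) {s : Fin n → Finset α} (hs : ∀ j, s j ⊆ E) :
    potential E f s ≤ ∑ j, ∑ e ∈ s j, p e := by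
  rw [sum_sum_eq_sum_users_mul hs]
  refine sum_le_sum fun e he => ?_
  have := sum_le_card_nsmul (Icc 1 (users s e)) (f e) (p e)
    fun k hk => hone e he ▸ hmono e he 1 k le_rfl (mem_Icc.mp hk).1
  simpa [nsmul_eq_mul] using this

lemma sum_price_le_card_mul_pay (hp : ∀ e ∈ E, 0 ≤ p e)
    (hlb : ∀ e ∈ E, ∀ k : ℕ, 1 ≤ k → p e / k ≤ f e k) {s : Fin n → Finset α}
    (hs : ∀ j, s j ⊆ E) (j : Fin n) : ∑ e ∈ s j, p e ≤ n * pay f s j := by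
  rw [pay, mul_sum]
  refine sum_le_sum fun e he => ?_
  have hx := one_le_users he
  calc p e ≤ users s e * f e (users s e) :=
        (div_le_iff₀' (by exact_mod_cast hx)).mp (hlb e (hs j he) _ hx)
    _ ≤ n * f e (users s e) := by
        gcongr
        · exact cost_nonneg hp hlb (hs j he) hx
        · exact_mod_cast users_le s e

lemma potential_le_card_mul_sum_pay (hp : ∀ e ∈ E, 0 ≤ p e)
    (hmono : ∀ e ∈ E, ∀ a b : ℕ, 1 ≤ a → a ≤ b → f e b ≤ f e a)
    (hlb : ∀ e ∈ E, ∀ k : ℕ, 1 ≤ k → p e / k ≤ f e k)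
    (hone : ∀ e ∈ E, f e 1 = p e) {s : Fin n → Finset α} (hs : ∀ j, s j ⊆ E) :
    potential E f s ≤ n * ∑ j, pay f s j := by
  rw [mul_sum]
  exact (potential_le_sum_sum hmono hone hs).trans
    (sum_le_sum fun j _ => sum_price_le_card_mul_pay hp hlb hs j)

end Stmt16

open Stmt16 in
/-- Max-cost PoS at most `n²` for capacitated *asymmetric* cost-sharing
connection games with generalized cost-sharing functions: if `s` is a Nash
equilibrium reached from a max-cost optimal profile `sstar` by cost-decreasing
deviations (so `Φ(s) ≤ Φ(sstar)`), then
`cost_mc(s) ≤ n² · cost_mc(sstar)`. -/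
theorem stmt_16 {α : Type*} [DecidableEq α] (E : Finset α) (n : ℕ) (hn : 1 ≤ n)
    (p : α → ℝ) (f : α → ℕ → ℝ)
    (hp : ∀ e ∈ E, 0 ≤ p e)
    (hmono : ∀ e ∈ E, ∀ a b : ℕ, 1 ≤ a → a ≤ b → f e b ≤ f e a)
    (hlb : ∀ e ∈ E, ∀ k : ℕ, 1 ≤ k → p e / (k : ℝ) ≤ f e k)
    (hone : ∀ e ∈ E, f e 1 = p e)
    (s sstar : Fin n → Finset α)
    (hsE : ∀ j, s j ⊆ E) (hsstarE : ∀ j, sstar j ⊆ E)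
    -- the potential weakly decreases along the cost-decreasing deviations
    (hΦ : potential E f s ≤ potential E f sstar) :
    Finset.univ.sup' (Finset.univ_nonempty_iff.mpr ⟨⟨0, hn⟩⟩) (pay f s)
      ≤ (n : ℝ) ^ 2 *
        Finset.univ.sup' (Finset.univ_nonempty_iff.mpr ⟨⟨0, hn⟩⟩) (pay f sstar) := by
  calc univ.sup' _ (pay f s)
      ≤ ∑ j, pay f s j := sup'_le_sum_of_nonneg _ fun j _ => pay_nonneg hp hlb hsE j
    _ ≤ potential E f s := sum_pay_le_potential hmono hsE
    _ ≤ potential E f sstar := hΦ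
    _ ≤ n * ∑ j, pay f sstar j := potential_le_card_mul_sum_pay hp hmono hlb hone hsstarE
    _ ≤ n * (n * univ.sup' _ (pay f sstar)) := by
        gcongr
        simpa using sum_le_card_nsmul_sup' (univ_nonempty_iff.mpr ⟨⟨0, hn⟩⟩) (pay f sstar)
    _ = (n : ℝ) ^ 2 * univ.sup' _ (pay f sstar) := by ring
end
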